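/- Let δ ≥ 0 and p > 0 be real numbers with (8δ³ + 9δ)/(27p) < 1, let F_r(x) = -(1/2)·x·(1 + 2δx - x²) - p·sin(φ), and let x₁ = (2δ + √(4δ² + 3))/3, x₂ = (2δ - √(4δ² + 3))/3. Then there is a unique angle φ in the open interval (-π/2, π/2) for which the balancing condition F_r(x₁) + F_r(x₂) = 0 holds, namely φ_opt = -arcsin( (8δ³ + 9δ)/(27p) ); moreover, for any real φ, F_r(x₁) + F_r(x₂) = 0 if and only if sin(φ) = -(8δ³ + 9δ)/(27p). -/
import Mathlib


open Real

/-- Restoring force of the asymmetric bistable energy harvester. -/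
noncomputable def Fr (δ p φ : ℝ) : ℝ → ℝ :=
  fun x => -(1/2) * x * (1 + 2*δ*x - x^2) - p * Real.sin φ

/-- For `δ ≥ 0`, `p > 0` with `(8δ³ + 9δ)/(27p) < 1`, there is a unique angle
`φ ∈ (-π/2, π/2)` satisfying the balancing condition `F_r(x₁) + F_r(x₂) = 0`,
namely `φ_opt = -arcsin((8δ³ + 9δ)/(27p))`; moreover, for any real `φ`,
the balancing condition holds iff `sin φ = -(8δ³ + 9δ)/(27p)`. -/
theorem stmt3 (δ p : ℝ) (hδ : 0 ≤ δ) (hp : 0 < p)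
    (hlt : (8*δ^3 + 9*δ)/(27*p) < 1) :
    (∃! φ : ℝ, φ ∈ Set.Ioo (-(π/2)) (π/2) ∧
      Fr δ p φ ((2*δ + Real.sqrt (4*δ^2 + 3))/3) +
        Fr δ p φ ((2*δ - Real.sqrt (4*δ^2 + 3))/3) = 0) ∧
    (-Real.arcsin ((8*δ^3 + 9*δ)/(27*p)) ∈ Set.Ioo (-(π/2)) (π/2) ∧
      Fr δ p (-Real.arcsin ((8*δ^3 + 9*δ)/(27*p)))
          ((2*δ + Real.sqrt (4*δ^2 + 3))/3) +
        Fr δ p (-Real.arcsin ((8*δ^3 + 9*δ)/(27*p)))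
          ((2*δ - Real.sqrt (4*δ^2 + 3))/3) = 0) ∧
    (∀ φ : ℝ,
      Fr δ p φ ((2*δ + Real.sqrt (4*δ^2 + 3))/3) +
        Fr δ p φ ((2*δ - Real.sqrt (4*δ^2 + 3))/3) = 0 ↔
      Real.sin φ = -((8*δ^3 + 9*δ)/(27*p))) := by

  set t := (8*δ^3 + 9*δ)/(27*p) with ht
  have hs : Real.sqrt (4*δ^2 + 3) ^ 2 = 4*δ^2 + 3 := Real.sq_sqrt (by positivity)
  have ht0 : 0 ≤ t := by positivity
  have ht1 : -1 ≤ t := by linarith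
  have hkey : ∀ φ : ℝ,
      (Fr δ p φ ((2*δ + Real.sqrt (4*δ^2 + 3))/3) +
        Fr δ p φ ((2*δ - Real.sqrt (4*δ^2 + 3))/3) = 0 ↔
      Real.sin φ = -t) := by
    intro φ
    have hsum : Fr δ p φ ((2*δ + Real.sqrt (4*δ^2 + 3))/3) +
        Fr δ p φ ((2*δ - Real.sqrt (4*δ^2 + 3))/3)
        = -(16*δ^3 + 18*δ)/27 - 2*p*Real.sin φ := by
      simp only [Fr]
      ring
    rw [hsum, ht]
    constructor
    · intro h
      field_simp
      field_simp at h
      linarith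
    · intro h
      rw [h]
      field_simp
      ring
  have hmem : -Real.arcsin t ∈ Set.Ioo (-(π/2)) (π/2) := by
    constructor
    · have := (Real.arcsin_lt_pi_div_two (x := t)).mpr hlt
      linarith
    · have : 0 ≤ Real.arcsin t := Real.arcsin_nonneg.mpr ht0
      have hπ : 0 < π/2 := by positivity
      linarith
  have hsin : Real.sin (-Real.arcsin t) = -t := by
    rw [Real.sin_neg, Real.sin_arcsin ht1 (le_of_lt hlt)]
  refine ⟨⟨-Real.arcsin t, ⟨hmem, (hkey _).mpr hsin⟩, ?_⟩, ⟨hmem, (hkey _).mpr hsin⟩, hkey⟩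
  rintro φ ⟨hφ, hbal⟩
  have h1 : Real.sin φ = -t := (hkey φ).mp hbal
  have h2 : Real.sin φ = Real.sin (-Real.arcsin t) := by rw [h1, hsin]
  exact Real.injOn_sin (Set.mem_Icc_of_Ioo hφ) (Set.mem_Icc_of_Ioo hmem) h2
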